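/- arXiv:1106.4948 — 5 statements merged into one kernel-verified Lean document; each statement's English description precedes it below -/
import Mathlib

section
/- Define f_χ(m) = tanh(β) · Σ_{S ∈ {-1,1}^k} (∏_{j=1}^k (1+S_j m)/2) · χ(S), where χ(S) = sgn(Σ_j S_j) + 1[Σ_j S_j = 0]·γ(S) with γ : {-1,1}^k → {-1,1} satisfying Σ_S 1[Σ_j S_j = 0]·γ(S) = 0 (and sgn(0)=0). For any function α̅ : {-1,1}^k → [-1,1] with Σ_S α̅(S) = 0, define f_α(m) = tanh(β) · Σ_S (∏_j (1+S_j m)/2) · α̅(S). Then f_χ(m) ≥ f_α(m) for all m ∈ [0,1), and f_α(m) ≥ f_χ(m) for all m ∈ (-1,0]. -/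
/-- `pm b` maps a Boolean to the spin value ±1. -/
noncomputable def pm (b : Bool) : ℝ := if b then 1 else -1

lemma pm_not (b : Bool) : pm (!b) = -pm b := by cases b <;> simp [pm]

def flipE (k : ℕ) : (Fin k → Bool) ≃ (Fin k → Bool) :=
  ⟨fun S j => !(S j), fun S j => !(S j), fun S => by funext j; simp,
   fun S => by funext j; simp⟩

lemma sum_pm_flip {k : ℕ} (S : Fin k → Bool) :
    ∑ j, pm (!(S j)) = -(∑ j, pm (S j)) := by
  simp [pm_not]

def cnt {k : ℕ} (S : Fin k → Bool) : ℕ :=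
  (Finset.univ.filter (fun j => S j = true)).card

lemma cnt_le {k : ℕ} (S : Fin k → Bool) : cnt S ≤ k := by
  simpa [cnt] using (Finset.card_filter_le Finset.univ (fun j => S j = true))

lemma sum_pm {k : ℕ} (S : Fin k → Bool) :
    ∑ j, pm (S j) = 2 * (cnt S : ℝ) - k := by
  have h : ∀ j, pm (S j) = 2 * (if S j = true then (1:ℝ) else 0) - 1 := by
    intro j; cases h : S j <;> simp [pm] <;> norm_num
  rw [Finset.sum_congr rfl (fun j _ => h j)]
  rw [Finset.sum_sub_distrib, ← Finset.mul_sum, Finset.sum_boole]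
  simp [cnt]

lemma prod_w {k : ℕ} (m : ℝ) (S : Fin k → Bool) :
    ∏ j, (1 + pm (S j) * m) / 2
      = ((1+m)/2) ^ (cnt S) * ((1-m)/2) ^ (k - cnt S) := by
  have h : ∀ j, (1 + pm (S j) * m)/2 = if S j = true then (1+m)/2 else (1-m)/2 := by
    intro j; cases h : S j <;> simp [pm] <;> ring
  rw [Finset.prod_congr rfl (fun j _ => h j), Finset.prod_ite, Finset.prod_const,
    Finset.prod_const]
  congr 2
  have := Finset.card_filter_add_card_filter_not
    (s := (Finset.univ : Finset (Fin k))) (p := fun j => S j = true)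
  simp only [Finset.card_univ, Fintype.card_fin] at this
  simp only [cnt]
  omega

lemma sign_sum_zero (k : ℕ) :
    ∑ S : Fin k → Bool, Real.sign (∑ j, pm (S j)) = 0 := by
  have h := Fintype.sum_equiv (flipE k)
    (fun S : Fin k → Bool => Real.sign (∑ j, pm (S j)))
    (fun S : Fin k → Bool => -Real.sign (∑ j, pm (S j)))
    (fun S => by
      simp only [flipE, Equiv.coe_fn_mk]
      rw [sum_pm_flip, Real.sign_neg, neg_neg])
  rw [Finset.sum_neg_distrib] at h
  linarith

lemma core (k : ℕ) (hk : 0 < k) (m : ℝ) (hm0 : 0 ≤ m) (hm1 : m < 1)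
    (γ : (Fin k → Bool) → Bool)
    (hγ : ∑ S : Fin k → Bool, (if (∑ j, pm (S j)) = 0 then pm (γ S) else 0) = 0)
    (A : (Fin k → Bool) → ℝ)
    (hA : ∀ S, A S ∈ Set.Icc (-1:ℝ) 1)
    (hAsum : ∑ S : Fin k → Bool, A S = 0) :
    ∑ S : Fin k → Bool, (∏ j, (1 + pm (S j) * m) / 2) * A S ≤
    ∑ S : Fin k → Bool, (∏ j, (1 + pm (S j) * m) / 2) *
      (Real.sign (∑ j, pm (S j)) + (if (∑ j, pm (S j)) = 0 then pm (γ S) else 0)) := by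
  set p : ℝ := (1+m)/2 with hp
  set q : ℝ := (1-m)/2 with hq
  have hq0 : 0 ≤ q := by rw [hq]; linarith
  have hp0 : 0 ≤ p := by rw [hp]; linarith
  have hqp : q ≤ p := by rw [hp, hq]; linarith
  set c : ℕ := (k+1)/2 with hc
  have hck : c ≤ k := by omega
  set w0 : ℝ := p ^ c * q ^ (k - c) with hw0
  set w : (Fin k → Bool) → ℝ := fun S => ∏ j, (1 + pm (S j) * m) / 2 with hw
  set χ : (Fin k → Bool) → ℝ := fun S =>
    Real.sign (∑ j, pm (S j)) + (if (∑ j, pm (S j)) = 0 then pm (γ S) else 0) with hχ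
  -- sum of χ is zero
  have hχsum : ∑ S : Fin k → Bool, χ S = 0 := by
    simp only [hχ, Finset.sum_add_distrib, sign_sum_zero, hγ, add_zero]
  -- per-term nonnegativity
  have hterm : ∀ S : Fin k → Bool, 0 ≤ (w S - w0) * (χ S - A S) := by
    intro S
    have hwS : w S = p ^ (cnt S) * q ^ (k - cnt S) := prod_w m S
    have hs : ∑ j, pm (S j) = 2 * (cnt S : ℝ) - k := sum_pm S
    have hcntk : cnt S ≤ k := cnt_le S
    rcases lt_trichotomy (∑ j, pm (S j)) 0 with hlt | heq | hgt
    ·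
      have h2 : 2 * cnt S < k := by
        rw [hs] at hlt
        have : 2 * (cnt S : ℝ) < k := by linarith
        exact_mod_cast this
      have hnc : cnt S ≤ c := by omega
      have hwle : w S ≤ w0 := by
        rw [hwS, hw0]
        have e1 : p ^ c = p ^ (cnt S) * p ^ (c - cnt S) := by
          rw [← pow_add]; congr 1; omega
        have e2 : q ^ (k - cnt S) = q ^ (c - cnt S) * q ^ (k - c) := by
          rw [← pow_add]; congr 1; omega
        rw [e1, e2]
        have hqq : q ^ (c - cnt S) ≤ p ^ (c - cnt S) := pow_le_pow_left₀ hq0 hqp _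
        have h1 : 0 ≤ p ^ (cnt S) := pow_nonneg hp0 _
        have h2 : 0 ≤ q ^ (k - c) := pow_nonneg hq0 _
        calc p ^ cnt S * (q ^ (c - cnt S) * q ^ (k - c))
            ≤ p ^ cnt S * (p ^ (c - cnt S) * q ^ (k - c)) := by
              apply mul_le_mul_of_nonneg_left _ h1
              exact mul_le_mul_of_nonneg_right hqq h2
          _ = p ^ cnt S * p ^ (c - cnt S) * q ^ (k - c) := by ring
      have hχS : χ S = -1 := by
        simp only [hχ]
        rw [Real.sign_of_neg hlt, if_neg (ne_of_lt hlt)]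
        ring
      have hAS := hA S
      have : χ S - A S ≤ 0 := by rw [hχS]; have := hAS.1; linarith
      have hw0le : w S - w0 ≤ 0 := by linarith
      nlinarith [hw0le, this]
    · -- zero: w S = w0
      have h2 : 2 * cnt S = k := by
        rw [hs] at heq
        have : 2 * (cnt S : ℝ) = k := by linarith
        exact_mod_cast this
      have : cnt S = c := by omega
      have : w S = w0 := by rw [hwS, hw0, this]
      rw [this]; simp
    · -- positive: c ≤ cnt S, w0 ≤ w S, χ S = 1
      have h2 : k < 2 * cnt S := by
        rw [hs] at hgt
        have : (k:ℝ) < 2 * (cnt S : ℝ) := by linarith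
        exact_mod_cast this
      have hnc : c ≤ cnt S := by omega
      have hwge : w0 ≤ w S := by
        rw [hwS, hw0]
        have e1 : p ^ (cnt S) = p ^ c * p ^ (cnt S - c) := by
          rw [← pow_add]; congr 1; omega
        have e2 : q ^ (k - c) = q ^ (cnt S - c) * q ^ (k - cnt S) := by
          rw [← pow_add]; congr 1; omega
        rw [e1, e2]
        have hqq : q ^ (cnt S - c) ≤ p ^ (cnt S - c) := pow_le_pow_left₀ hq0 hqp _
        have h1 : 0 ≤ p ^ c := pow_nonneg hp0 _
        have h3 : 0 ≤ q ^ (k - cnt S) := pow_nonneg hq0 _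
        calc p ^ c * (q ^ (cnt S - c) * q ^ (k - cnt S))
            ≤ p ^ c * (p ^ (cnt S - c) * q ^ (k - cnt S)) := by
              apply mul_le_mul_of_nonneg_left _ h1
              exact mul_le_mul_of_nonneg_right hqq h3
          _ = p ^ c * p ^ (cnt S - c) * q ^ (k - cnt S) := by ring
      have hχS : χ S = 1 := by
        simp only [hχ]
        rw [Real.sign_of_pos hgt, if_neg (ne_of_gt hgt)]
        ring
      have hAS := hA S
      have : 0 ≤ χ S - A S := by rw [hχS]; have := hAS.2; linarith
      exact mul_nonneg (by linarith) this
  -- assemble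
  have hsum : 0 ≤ ∑ S : Fin k → Bool, (w S - w0) * (χ S - A S) :=
    Finset.sum_nonneg (fun S _ => hterm S)
  have hexp : ∑ S : Fin k → Bool, (w S - w0) * (χ S - A S)
      = ∑ S : Fin k → Bool, w S * χ S - ∑ S : Fin k → Bool, w S * A S
        - w0 * ∑ S : Fin k → Bool, χ S + w0 * ∑ S : Fin k → Bool, A S := by
    rw [Finset.mul_sum, Finset.mul_sum, ← Finset.sum_sub_distrib, ← Finset.sum_sub_distrib,
      ← Finset.sum_add_distrib]
    exact Finset.sum_congr rfl (fun S _ => by ring)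
  rw [hexp, hχsum, hAsum] at hsum
  have goal_eq : ∑ S : Fin k → Bool, (∏ j, (1 + pm (S j) * m) / 2) * A S
      = ∑ S : Fin k → Bool, w S * A S := rfl
  linarith [hsum]

lemma w_flip {k : ℕ} (m : ℝ) (S : Fin k → Bool) :
    ∏ j, (1 + pm (!(S j)) * (-m)) / 2 = ∏ j, (1 + pm (S j) * m) / 2 := by
  apply Finset.prod_congr rfl
  intro j _
  rw [pm_not]
  ring

/-- The majority-type map `f_χ` dominates `f_α` for any centered ensemble average `A`:
`f_χ(m) ≥ f_α(m)` on `[0,1)` and `f_α(m) ≥ f_χ(m)` on `(-1,0]`. -/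
theorem stmt2 (k : ℕ) (hk : 0 < k) (β : ℝ) (hβ : 0 < β)
    (γ : (Fin k → Bool) → Bool)
    (hγ : ∑ S : Fin k → Bool, (if (∑ j, pm (S j)) = 0 then pm (γ S) else 0) = 0)
    (A : (Fin k → Bool) → ℝ)
    (hA : ∀ S, A S ∈ Set.Icc (-1:ℝ) 1)
    (hAsum : ∑ S : Fin k → Bool, A S = 0)
    (χ : (Fin k → Bool) → ℝ)
    (hχ : ∀ S, χ S = Real.sign (∑ j, pm (S j)) +
      (if (∑ j, pm (S j)) = 0 then pm (γ S) else 0))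
    (fχ fα : ℝ → ℝ)
    (hfχ : ∀ m, fχ m = Real.tanh β *
      ∑ S : Fin k → Bool, (∏ j, (1 + pm (S j) * m) / 2) * χ S)
    (hfα : ∀ m, fα m = Real.tanh β *
      ∑ S : Fin k → Bool, (∏ j, (1 + pm (S j) * m) / 2) * A S) :
    (∀ m ∈ Set.Ico (0:ℝ) 1, fα m ≤ fχ m) ∧
    (∀ m ∈ Set.Ioc (-1:ℝ) 0, fχ m ≤ fα m) := by
  have htanh : 0 ≤ Real.tanh β := by
    rw [Real.tanh_eq_sinh_div_cosh]
    exact div_nonneg (Real.sinh_pos_iff.mpr hβ).le (Real.cosh_pos β).le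
  constructor
  · intro m hm
    rw [hfχ m, hfα m]
    apply mul_le_mul_of_nonneg_left _ htanh
    have := core k hk m hm.1 hm.2 γ hγ A hA hAsum
    simpa only [hχ] using this
  · intro m hm
    rw [hfχ m, hfα m]
    apply mul_le_mul_of_nonneg_left _ htanh
    set γ' : (Fin k → Bool) → Bool := fun S => !(γ (fun j => !(S j))) with hγ'def
    set A' : (Fin k → Bool) → ℝ := fun S => -(A (fun j => !(S j))) with hA'def
    have hγ' : ∑ S : Fin k → Bool, (if (∑ j, pm (S j)) = 0 then pm (γ' S) else 0) = 0 := by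
      have h := Fintype.sum_equiv (flipE k)
        (fun S : Fin k → Bool => if (∑ j, pm (S j)) = 0 then pm (γ' S) else 0)
        (fun S : Fin k → Bool => if (∑ j, pm (S j)) = 0 then -pm (γ S) else 0)
        (fun S => by
          simp only [flipE, Equiv.coe_fn_mk, hγ'def, pm_not, sum_pm_flip, neg_eq_zero]
          congr 1
          simp)
      rw [h]
      rw [show (fun S : Fin k → Bool => if (∑ j, pm (S j)) = 0 then -pm (γ S) else 0)
          = (fun S : Fin k → Bool => -(if (∑ j, pm (S j)) = 0 then pm (γ S) else 0)) by
        funext S; split <;> simp]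
      rw [Finset.sum_neg_distrib, hγ, neg_zero]
    have hA' : ∀ S, A' S ∈ Set.Icc (-1:ℝ) 1 := by
      intro S
      have := hA (fun j => !(S j))
      exact ⟨by simpa [hA'def] using neg_le_neg this.2, by simpa [hA'def] using neg_le_neg this.1⟩
    have hA'sum : ∑ S : Fin k → Bool, A' S = 0 := by
      have h := Fintype.sum_equiv (flipE k)
        (fun S : Fin k → Bool => A' S)
        (fun S : Fin k → Bool => -A S)
        (fun S => by simp [flipE, hA'def])
      rw [h, Finset.sum_neg_distrib, hAsum, neg_zero]
    have hcore := core k hk (-m) (by linarith [hm.2]) (by linarith [hm.1]) γ' hγ' A' hA' hA'sum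
    -- reindex both sides of hcore by the flip equivalence
    have hL : ∑ S : Fin k → Bool, (∏ j, (1 + pm (S j) * (-m)) / 2) * A' S
        = -∑ S : Fin k → Bool, (∏ j, (1 + pm (S j) * m) / 2) * A S := by
      rw [← Finset.sum_neg_distrib]
      exact Fintype.sum_equiv (flipE k) _ _
        (fun S => by
          simp only [flipE, Equiv.coe_fn_mk, hA'def]
          have hw : (∏ j, (1 + pm (S j) * (-m))/2) = ∏ j, (1 + pm (!(S j)) * m)/2 :=
            Finset.prod_congr rfl (fun j _ => by rw [pm_not]; ring)
          rw [hw]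
          ring)
    have hR : ∑ S : Fin k → Bool, (∏ j, (1 + pm (S j) * (-m)) / 2) *
        (Real.sign (∑ j, pm (S j)) + (if (∑ j, pm (S j)) = 0 then pm (γ' S) else 0))
        = -∑ S : Fin k → Bool, (∏ j, (1 + pm (S j) * m) / 2) * χ S := by
      rw [← Finset.sum_neg_distrib]
      exact Fintype.sum_equiv (flipE k) _ _
        (fun S => by
          simp only [flipE, Equiv.coe_fn_mk]
          have hw : (∏ j, (1 + pm (S j) * (-m))/2) = ∏ j, (1 + pm (!(S j)) * m)/2 :=
            Finset.prod_congr rfl (fun j _ => by rw [pm_not]; ring)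
          rw [hw, hχ (fun j => !(S j)), sum_pm_flip, Real.sign_neg]
          have hγeq : pm (γ' S) = -pm (γ (fun j => !(S j))) := by
            rw [hγ'def]; exact pm_not _
          rw [hγeq]
          by_cases hc : (∑ j, pm (S j)) = 0
          · rw [if_pos hc, if_pos (show -(∑ j, pm (S j)) = 0 by rw [hc, neg_zero])]; ring
          · rw [if_neg hc, if_neg (show ¬(-(∑ j, pm (S j)) = 0) by simpa using hc)]; ring)
    rw [hL, hR] at hcore
    linarith
end

section
/- Let k be odd and f_χ(m) = tanh(β)·Σ_{S∈{-1,1}^k}(∏_j (1+S_j m)/2)·sgn(Σ_j S_j). Then the derivative of f_χ at m = 0 equals tanh(β)·k·C(k-1,(k-1)/2)/2^{k-1}. Consequently, m = 0 is a locally stable fixed point (|f_χ'(0)| < 1) if and only if tanh(β) < 2^{k-1}/(k·C(k-1,(k-1)/2)). -/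
/-!
At `m = 0` every factor `(1 + S_j m)/2` equals `1/2`, so the product rule gives
`f_χ'(0) = tanh β · 2^{-k} · Σ_S (Σ_j S_j) · sgn(Σ_j S_j)`. Fix a spin `j` and let `R` be the sum
of the other `k - 1` spins; summing `S_j · sgn(S_j + R)` over `S_j = ±1` gives
`sgn(1 + R) - sgn(R - 1)`, which for the even number `R` is `2` if `R = 0` and `0` otherwise.
Hence each of the `k` spins contributes `2 · C(k-1, (k-1)/2)`. As `tanh β > 0`, the stability
criterion is a rearrangement of this value.
-/

open Finset

theorem hasDerivAt_prod_one_add_mul_div_two {ι : Type*} [Fintype ι] (a : ι → ℝ) :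
    HasDerivAt (fun x => ∏ j, (1 + a j * x) / 2) ((∑ j, a j) / 2 ^ Fintype.card ι) 0 := by
  classical
  simp_rw [prod_div_distrib, prod_const, card_univ]
  refine HasDerivAt.div_const ?_ _
  simpa using HasDerivAt.fun_finsetProd (u := univ) (x := (0 : ℝ))
    (fun j _ => ((hasDerivAt_id (0 : ℝ)).const_mul (a j)).const_add 1)

noncomputable def majorityMap (k : ℕ) (m : ℝ) : ℝ :=
  ∑ S : Fin k → Bool, (∏ j, (1 + pm (S j) * m) / 2) * Real.sign (∑ j, pm (S j))

theorem hasDerivAt_majorityMap_zero (k : ℕ) :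
    HasDerivAt (majorityMap k)
      ((∑ S : Fin k → Bool, (∑ j, pm (S j)) * Real.sign (∑ j, pm (S j))) / 2 ^ k) 0 := by
  rw [sum_div]
  refine HasDerivAt.fun_sum fun S _ => ?_
  simpa [div_mul_eq_mul_div] using
    (hasDerivAt_prod_one_add_mul_div_two fun j => pm (S j)).mul_const (Real.sign (∑ j, pm (S j)))

def finsetEquivBoolFun (α : Type*) [Fintype α] [DecidableEq α] : Finset α ≃ (α → Bool) where
  toFun s i := decide (i ∈ s)
  invFun T := {i | T i}
  left_inv s := by ext; simp
  right_inv T := by funext; simp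

theorem sum_boolFun_apply_card {α M : Type*} [Fintype α] [DecidableEq α] [AddCommMonoid M]
    (g : ℕ → M) :
    ∑ T : α → Bool, g #{i | T i} =
      ∑ t ∈ range (Fintype.card α + 1), (Fintype.card α).choose t • g t := by
  rw [← (finsetEquivBoolFun α).sum_comp, ← card_univ, ← sum_powerset_apply_card, powerset_univ]
  simp [finsetEquivBoolFun]

theorem sum_pm_eq {α : Type*} [Fintype α] (T : α → Bool) :
    ∑ i, pm (T i) = 2 * #{i | T i} - Fintype.card α := by
  have hpm : ∀ b, pm b = 2 * (if b then 1 else 0) - 1 := by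
    intro b
    cases b <;> norm_num [pm]
  simp only [hpm, sum_sub_distrib, ← mul_sum, sum_boole]
  simp

theorem sign_one_add_sub_sign_neg_one_add (c m : ℕ) :
    Real.sign (1 + (2 * c - 2 * m)) - Real.sign (-1 + (2 * c - 2 * m)) =
      if c = m then 2 else 0 := by
  rcases lt_trichotomy c m with h | rfl | h
  · have : (c : ℝ) + 1 ≤ m := by exact_mod_cast h
    rw [Real.sign_of_neg (by linarith), Real.sign_of_neg (by linarith), if_neg h.ne]
    ring
  · norm_num [Real.sign_of_neg]
  · have : (m : ℝ) + 1 ≤ c := by exact_mod_cast h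
    rw [Real.sign_of_pos (by linarith), Real.sign_of_pos (by linarith), if_neg h.ne']
    ring

theorem sum_sum_pm_mul_sign_succ (n : ℕ) :
    ∑ S : Fin (n + 1) → Bool, (∑ j, pm (S j)) * Real.sign (∑ j, pm (S j)) =
      (n + 1) * ∑ T : Fin n → Bool,
        (Real.sign (1 + ∑ i, pm (T i)) - Real.sign (-1 + ∑ i, pm (T i))) := by
  have hspin : ∀ j : Fin (n + 1),
      ∑ S : Fin (n + 1) → Bool, pm (S j) * Real.sign (∑ i, pm (S i)) =
        ∑ T : Fin n → Bool, (Real.sign (1 + ∑ i, pm (T i)) - Real.sign (-1 + ∑ i, pm (T i))) := by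
    intro j
    rw [← (Fin.insertNthEquiv (fun _ => Bool) j).sum_comp, Fintype.sum_prod_type,
      Fintype.sum_bool, sum_sub_distrib]
    simp [Fin.sum_univ_succAbove _ j, pm, sub_eq_add_neg]
  simp_rw [sum_mul]
  rw [sum_comm, sum_congr rfl fun j _ => hspin j, sum_const, card_univ, Fintype.card_fin,
    nsmul_eq_mul]
  push_cast
  rfl

theorem sum_sign_one_add_sub_sign_neg_one_add (m : ℕ) :
    ∑ T : Fin (2 * m) → Bool,
        (Real.sign (1 + ∑ i, pm (T i)) - Real.sign (-1 + ∑ i, pm (T i))) =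
      2 * (2 * m).choose m := by
  simp_rw [sum_pm_eq, Fintype.card_fin, Nat.cast_mul, Nat.cast_ofNat,
    sign_one_add_sub_sign_neg_one_add]
  rw [sum_boolFun_apply_card fun c => if c = m then (2 : ℝ) else 0, Fintype.card_fin]
  simp_rw [smul_ite, smul_zero]
  rw [sum_ite_eq' _ _ _, if_pos (mem_range.2 (by omega)), nsmul_eq_mul, mul_comm]

theorem sum_sum_pm_mul_sign_two_mul_add_one (m : ℕ) :
    ∑ S : Fin (2 * m + 1) → Bool, (∑ j, pm (S j)) * Real.sign (∑ j, pm (S j)) =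
      (2 * m + 1) * (2 * (2 * m).choose m) := by
  rw [sum_sum_pm_mul_sign_succ, sum_sign_one_add_sub_sign_neg_one_add]
  push_cast
  rfl

theorem tanh_pos_of_pos {x : ℝ} (hx : 0 < x) : 0 < Real.tanh x := by
  rw [Real.tanh_eq_sinh_div_cosh]
  exact div_pos (Real.sinh_pos_iff.2 hx) (Real.cosh_pos x)

/-- For odd `k`, the derivative of the majority magnetization map at `m = 0` equals
`tanh(β)·k·C(k-1,(k-1)/2)/2^(k-1)`; hence `|f_χ'(0)| < 1` iff
`tanh β < 2^(k-1)/(k·C(k-1,(k-1)/2))`. -/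
theorem stmt5 (k : ℕ) (hk : Odd k) (β : ℝ) (hβ : 0 < β)
    (fχ : ℝ → ℝ)
    (hf : ∀ m, fχ m = Real.tanh β *
      ∑ S : Fin k → Bool, (∏ j, (1 + pm (S j) * m) / 2) * Real.sign (∑ j, pm (S j))) :
    deriv fχ 0 = Real.tanh β * (k : ℝ) * (Nat.choose (k - 1) ((k - 1) / 2) : ℝ) / 2 ^ (k - 1)
    ∧ (|deriv fχ 0| < 1 ↔
        Real.tanh β < 2 ^ (k - 1) / ((k : ℝ) * (Nat.choose (k - 1) ((k - 1) / 2) : ℝ))) := by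
  obtain ⟨m, rfl⟩ := hk
  rw [Nat.add_sub_cancel, Nat.mul_div_cancel_left m two_pos]
  have hderiv : deriv fχ 0 = Real.tanh β * (2 * m + 1) * (2 * m).choose m / 2 ^ (2 * m) := by
    rw [show fχ = fun x => Real.tanh β * majorityMap (2 * m + 1) x from funext hf,
      ((hasDerivAt_majorityMap_zero _).const_mul _).deriv, sum_sum_pm_mul_sign_two_mul_add_one,
      pow_succ]
    ring
  have hchoose : (0 : ℝ) < (2 * m).choose m := by exact_mod_cast Nat.choose_pos (by omega)
  have hpos : 0 < Real.tanh β * (2 * m + 1) * (2 * m).choose m / 2 ^ (2 * m) := by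
    have htanh := tanh_pos_of_pos hβ
    positivity
  refine ⟨by rw [hderiv]; push_cast; rfl, ?_⟩
  rw [hderiv, abs_of_pos hpos, div_lt_one (by positivity), lt_div_iff₀ (by positivity)]
  push_cast
  rw [mul_assoc]
end

section
/- For any C ∈ [-1,1] and any k ≥ 1: Σ_{S,Ŝ ∈ {-1,1}^k} (∏_{j=1}^k (1 + S_j Ŝ_j C)/4) · sgn(Σ_j S_j Ŝ_j) = Σ_{S ∈ {-1,1}^k} (∏_{j=1}^k (1 + S_j C)/2) · sgn(Σ_j S_j). In particular, with T(C) = tanh²(β) times the left-hand side and f_χ(m) = tanh(β)·Σ_S (∏_j (1+S_j m)/2)·sgn(Σ_j S_j), one has T(C) = tanh(β)·f_χ(C). -/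
open Finset

lemma pm_mul_pm (a b : Bool) : pm a * pm b = pm (a == b) := by
  cases a <;> cases b <;> norm_num [pm]

lemma sum_comp_beq {ι M : Type*} [Fintype ι] [DecidableEq ι] [AddCommMonoid M]
    (S : ι → Bool) (g : (ι → Bool) → M) :
    ∑ S' : ι → Bool, g (fun j => S j == S' j) = ∑ U : ι → Bool, g U := by
  have hinv : Function.Involutive fun S' : ι → Bool => fun j => S j == S' j := by
    intro S'
    funext j
    show (S j == (S j == S' j)) = S' j
    cases S j <;> cases S' j <;> rfl
  exact Fintype.sum_bijective _ hinv.bijective _ _ fun _ => rfl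

lemma sum_sum_comp_pm_mul_pm {ι M : Type*} [Fintype ι] [DecidableEq ι] [AddCommMonoid M]
    (g : (ι → ℝ) → M) :
    ∑ S : ι → Bool, ∑ S' : ι → Bool, g (fun j => pm (S j) * pm (S' j))
      = 2 ^ Fintype.card ι • ∑ U : ι → Bool, g (fun j => pm (U j)) := by
  simp only [pm_mul_pm]
  rw [Fintype.sum_congr _ _ fun S => sum_comp_beq S fun U => g fun j => pm (U j),
    sum_const, card_univ, Fintype.card_fun, Fintype.card_bool]

lemma two_pow_card_mul_prod_div_four {ι : Type*} [Fintype ι] (a : ι → ℝ) :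
    2 ^ Fintype.card ι * ∏ j, a j / 4 = ∏ j, a j / 2 := by
  rw [← card_univ, ← prod_const, ← prod_mul_distrib]
  exact prod_congr rfl fun _ _ => by ring

theorem stmt6_general (k : ℕ) (β : ℝ)
    (C : ℝ)
    (T fχ : ℝ → ℝ)
    (hT : ∀ c, T c = Real.tanh β ^ 2 *
      ∑ S : Fin k → Bool, ∑ S' : Fin k → Bool,
        (∏ j, (1 + pm (S j) * pm (S' j) * c) / 4) * Real.sign (∑ j, pm (S j) * pm (S' j)))
    (hf : ∀ m, fχ m = Real.tanh β *
      ∑ S : Fin k → Bool, (∏ j, (1 + pm (S j) * m) / 2) * Real.sign (∑ j, pm (S j))) :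
    (∑ S : Fin k → Bool, ∑ S' : Fin k → Bool,
        (∏ j, (1 + pm (S j) * pm (S' j) * C) / 4) * Real.sign (∑ j, pm (S j) * pm (S' j))
      = ∑ S : Fin k → Bool, (∏ j, (1 + pm (S j) * C) / 2) * Real.sign (∑ j, pm (S j)))
    ∧ T C = Real.tanh β * fχ C := by
  have hsum : ∑ S : Fin k → Bool, ∑ S' : Fin k → Bool,
        (∏ j, (1 + pm (S j) * pm (S' j) * C) / 4) * Real.sign (∑ j, pm (S j) * pm (S' j))
      = ∑ S : Fin k → Bool, (∏ j, (1 + pm (S j) * C) / 2) * Real.sign (∑ j, pm (S j)) := by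
    refine (sum_sum_comp_pm_mul_pm
      fun v : Fin k → ℝ => (∏ j, (1 + v j * C) / 4) * Real.sign (∑ j, v j)).trans ?_
    rw [nsmul_eq_mul, Nat.cast_pow, Nat.cast_ofNat, mul_sum]
    exact Fintype.sum_congr _ _ fun U => by rw [← mul_assoc, two_pow_card_mul_prod_div_four]
  exact ⟨hsum, by rw [hT, hf, hsum]; ring⟩

/-- The two-replica majority correlation sum collapses to the single-replica majority
magnetization sum; consequently `T(C) = tanh(β)·f_χ(C)`. -/
theorem stmt6 (k : ℕ) (hk : 0 < k) (β : ℝ) (hβ : 0 < β)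
    (C : ℝ) (hC : C ∈ Set.Icc (-1:ℝ) 1)
    (T fχ : ℝ → ℝ)
    (hT : ∀ c, T c = Real.tanh β ^ 2 *
      ∑ S : Fin k → Bool, ∑ S' : Fin k → Bool,
        (∏ j, (1 + pm (S j) * pm (S' j) * c) / 4) * Real.sign (∑ j, pm (S j) * pm (S' j)))
    (hf : ∀ m, fχ m = Real.tanh β *
      ∑ S : Fin k → Bool, (∏ j, (1 + pm (S j) * m) / 2) * Real.sign (∑ j, pm (S j))) :
    (∑ S : Fin k → Bool, ∑ S' : Fin k → Bool,
        (∏ j, (1 + pm (S j) * pm (S' j) * C) / 4) * Real.sign (∑ j, pm (S j) * pm (S' j))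
      = ∑ S : Fin k → Bool, (∏ j, (1 + pm (S j) * C) / 2) * Real.sign (∑ j, pm (S j)))
    ∧ T C = Real.tanh β * fχ C :=
  stmt6_general k β C T fχ hT hf
end

section
/- Let q ∈ [0,1] satisfy q = tanh²(β)·( ((1+q)/2)^k·(1 + 1/(2^k−1)) − 1/(2^k−1) ). For any finite β (tanh²(β) < 1) and any k ≥ 1, q = 0 is the unique solution in [0,1); moreover q = 1 is a solution if and only if tanh²(β) = 1. -/
/-!
Writing `t = tanh² β`, the right-hand side equals `t ((1 + q)^k - 1) / (2^k - 1)`. By convexity of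
`x ↦ x^k`, `(1 + q)^k` lies below its chord `1 + (2^k - 1) q` on `[1, 2]`, so the right-hand side is at
most `t q`, which is `< q` when `t < 1` and `q > 0`. At `q = 1` the right-hand side is exactly `t`.
-/

lemma one_add_pow_le_chord (k : ℕ) {q : ℝ} (hq₀ : 0 ≤ q) (hq₁ : q ≤ 1) :
    (1 + q) ^ k ≤ 1 + (2 ^ k - 1) * q := by
  have h := (convexOn_pow k).2 (Set.mem_Ici.2 zero_le_one) (Set.mem_Ici.2 zero_le_two)
    (sub_nonneg.2 hq₁) hq₀ (sub_add_cancel 1 q)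
  simp only [smul_eq_mul, one_pow, show (1 - q) * 1 + q * 2 = 1 + q by ring] at h
  linarith

lemma two_pow_sub_one_pos {k : ℕ} (hk : 1 ≤ k) : (0 : ℝ) < 2 ^ k - 1 := by
  have : (2 : ℝ) ≤ 2 ^ k := le_self_pow₀ one_le_two (by omega)
  linarith

lemma overlap_rhs_eq {k : ℕ} (hk : 1 ≤ k) (t q : ℝ) :
    t * (((1 + q) / 2) ^ k * (1 + 1 / (2 ^ k - 1)) - 1 / (2 ^ k - 1)) =
      t * ((1 + q) ^ k - 1) / (2 ^ k - 1) := by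
  have hD := (two_pow_sub_one_pos hk).ne'
  rw [div_pow]
  field_simp
  ring

lemma overlap_rhs_lt_self {k : ℕ} (hk : 1 ≤ k) {t q : ℝ} (ht₀ : 0 ≤ t) (ht₁ : t < 1)
    (hq₀ : 0 < q) (hq₁ : q ≤ 1) :
    t * ((1 + q) ^ k - 1) / (2 ^ k - 1) < q := by
  have hD := two_pow_sub_one_pos hk
  have hchord := one_add_pow_le_chord k hq₀.le hq₁
  rw [div_lt_iff₀ hD]
  calc t * ((1 + q) ^ k - 1) ≤ t * ((2 ^ k - 1) * q) := by gcongr; linarith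
    _ < (2 ^ k - 1) * q := mul_lt_of_lt_one_left (mul_pos hD hq₀) ht₁
    _ = q * (2 ^ k - 1) := mul_comm _ _

/-- Stationary overlap equation for the uniform balanced-function ensemble:
for `tanh²β < 1` the only solution in `[0,1)` is `q = 0`; `q = 1` is a solution iff
`tanh²β = 1`. -/
theorem stmt9 (k : ℕ) (hk : 1 ≤ k) (β : ℝ)
    (g : ℝ → ℝ)
    (hg : ∀ q, g q = Real.tanh β ^ 2 *
      (((1 + q) / 2) ^ k * (1 + 1 / (2 ^ k - 1)) - 1 / (2 ^ k - 1))) :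
    (Real.tanh β ^ 2 < 1 → ∀ q ∈ Set.Ico (0:ℝ) 1, (g q = q ↔ q = 0)) ∧
    (g 1 = 1 ↔ Real.tanh β ^ 2 = 1) := by
  have hg' (q : ℝ) : g q = Real.tanh β ^ 2 * ((1 + q) ^ k - 1) / (2 ^ k - 1) := by
    rw [hg, overlap_rhs_eq hk]
  have hD := (two_pow_sub_one_pos hk).ne'
  refine ⟨fun ht q ⟨hq₀, hq₁⟩ => ⟨fun hfix => ?_, fun hq => by simp [hg', hq]⟩, ?_⟩
  · by_contra hq_ne
    have hlt := overlap_rhs_lt_self hk (sq_nonneg _) ht (lt_of_le_of_ne' hq₀ hq_ne) hq₁.le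
    rw [← hg', hfix] at hlt
    exact lt_irrefl q hlt
  · rw [hg', one_add_one_eq_two, mul_div_assoc, div_self hD, mul_one]
end

section
/- Let k be odd, b(k) = 2^{k-1}/(k·C(k-1,(k-1)/2)). If tanh²(β) < b(k), then C = 0 is the unique fixed point in (-1,1) of the map C ↦ tanh²(β)·Σ_{S,Ŝ∈{-1,1}^k}(∏_j (1+S_j Ŝ_j C)/4)·E[α(S)α(Ŝ)], for any distribution over balanced k-ary Boolean functions α (i.e. Σ_S α(S) = 0 for every α in the support). -/
lemma pm_mul_self (b : Bool) : pm b * pm b = 1 := by cases b <;> simp [pm]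

lemma pm_sq (b : Bool) : pm b ^ 2 = 1 := by cases b <;> simp [pm]

lemma diag_prod {k : ℕ} (S T : Fin k → Bool) :
    (∏ j, (1 + pm (S j) * pm (T j))) = if S = T then (2:ℝ)^k else 0 := by
  by_cases h : S = T
  · subst h
    simp [pm_mul_self]
    norm_num
  · simp only [h, if_false]
    obtain ⟨j, hj⟩ := Function.ne_iff.mp h
    apply Finset.prod_eq_zero (Finset.mem_univ j)
    cases hS : S j <;> cases hT : T j <;> simp_all [pm]

lemma key_expand {k : ℕ} (a : (Fin k → Bool) → ℝ) (C : ℝ) :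
    ∑ S : Fin k → Bool, ∑ T : Fin k → Bool,
      (∏ j, (1 + pm (S j) * pm (T j) * C)) * (a S * a T)
    = ∑ A ∈ (Finset.univ : Finset (Fin k)).powerset, C ^ A.card *
        (∑ S : Fin k → Bool, a S * ∏ j ∈ A, pm (S j)) ^ 2 := by
  have h1 : ∀ S T : Fin k → Bool,
      (∏ j, (1 + pm (S j) * pm (T j) * C)) * (a S * a T)
      = ∑ A ∈ (Finset.univ : Finset (Fin k)).powerset,
          C ^ A.card * ((a S * ∏ j ∈ A, pm (S j)) * (a T * ∏ j ∈ A, pm (T j))) := by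
    intro S T
    have hp : (∏ j, (1 + pm (S j) * pm (T j) * C))
        = ∑ A ∈ (Finset.univ : Finset (Fin k)).powerset,
            (∏ j ∈ A, pm (S j)) * (∏ j ∈ A, pm (T j)) * C ^ A.card := by
      have : (∏ j, (1 + pm (S j) * pm (T j) * C))
          = ∏ j, (pm (S j) * pm (T j) * C + 1) := by
        apply Finset.prod_congr rfl; intro j _; ring
      rw [this, Finset.prod_add]
      apply Finset.sum_congr rfl
      intro A _
      simp [Finset.prod_mul_distrib, Finset.prod_const]
    rw [hp, Finset.sum_mul]
    exact Finset.sum_congr rfl fun A _ => by ring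
  simp_rw [h1]
  rw [show (∑ S : Fin k → Bool, ∑ T : Fin k → Bool,
      ∑ A ∈ (Finset.univ : Finset (Fin k)).powerset,
        C ^ A.card * ((a S * ∏ j ∈ A, pm (S j)) * (a T * ∏ j ∈ A, pm (T j))))
      = ∑ A ∈ (Finset.univ : Finset (Fin k)).powerset, ∑ S : Fin k → Bool, ∑ T : Fin k → Bool,
        C ^ A.card * ((a S * ∏ j ∈ A, pm (S j)) * (a T * ∏ j ∈ A, pm (T j))) from by
    trans (∑ S : Fin k → Bool, ∑ A ∈ (Finset.univ : Finset (Fin k)).powerset,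
        ∑ T : Fin k → Bool,
          C ^ A.card * ((a S * ∏ j ∈ A, pm (S j)) * (a T * ∏ j ∈ A, pm (T j))))
    · exact Finset.sum_congr rfl fun S _ => Finset.sum_comm
    · exact Finset.sum_comm]
  refine Finset.sum_congr rfl fun A _ => ?_
  rw [sq, Finset.sum_mul_sum]
  rw [Finset.mul_sum]
  refine Finset.sum_congr rfl fun S _ => ?_
  rw [Finset.mul_sum]

lemma parseval {k : ℕ} (a : (Fin k → Bool) → ℝ) :
    ∑ A ∈ (Finset.univ : Finset (Fin k)).powerset,
      (∑ S : Fin k → Bool, a S * ∏ j ∈ A, pm (S j)) ^ 2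
    = 2 ^ k * ∑ S : Fin k → Bool, a S ^ 2 := by
  have h := key_expand a 1
  simp only [mul_one, one_pow, one_mul] at h
  rw [← h]
  simp_rw [diag_prod, ite_mul, zero_mul]
  rw [Finset.mul_sum]
  refine Finset.sum_congr rfl fun S _ => ?_
  rw [Finset.sum_ite_eq]
  simp [sq]

lemma Hbound {k : ℕ} (α : (Fin k → Bool) → Bool)
    (hα : ∑ S : Fin k → Bool, pm (α S) = 0) (C : ℝ) (hC : |C| ≤ 1) :
    |∑ S : Fin k → Bool, ∑ T : Fin k → Bool,
        (∏ j, (1 + pm (S j) * pm (T j) * C) / 4) * (pm (α S) * pm (α T))| ≤ |C| := by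
  set a : (Fin k → Bool) → ℝ := fun S => pm (α S) with ha
  have h4 : ∀ S T : Fin k → Bool, (∏ j, (1 + pm (S j) * pm (T j) * C) / 4)
      = (∏ j, (1 + pm (S j) * pm (T j) * C)) / 4 ^ k := by
    intro S T
    rw [Finset.prod_div_distrib, Finset.prod_const]
    simp
  have hsum : ∑ S : Fin k → Bool, ∑ T : Fin k → Bool,
      (∏ j, (1 + pm (S j) * pm (T j) * C) / 4) * (pm (α S) * pm (α T))
      = (∑ A ∈ (Finset.univ : Finset (Fin k)).powerset, C ^ A.card *
          (∑ S : Fin k → Bool, a S * ∏ j ∈ A, pm (S j)) ^ 2) / 4 ^ k := by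
    rw [← key_expand a C]
    rw [Finset.sum_div]
    refine Finset.sum_congr rfl fun S _ => ?_
    rw [Finset.sum_div]
    refine Finset.sum_congr rfl fun T _ => ?_
    rw [h4]
    ring
  rw [hsum]
  have hP0 : (∑ S : Fin k → Bool, a S * ∏ j ∈ (∅ : Finset (Fin k)), pm (S j)) = 0 := by
    simpa using hα
  have hterm : ∀ A ∈ (Finset.univ : Finset (Fin k)).powerset,
      |C ^ A.card * (∑ S : Fin k → Bool, a S * ∏ j ∈ A, pm (S j)) ^ 2|
      ≤ |C| * (∑ S : Fin k → Bool, a S * ∏ j ∈ A, pm (S j)) ^ 2 := by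
    intro A _
    rcases eq_or_ne A ∅ with rfl | hA
    · rw [hP0]; simp
    · rw [abs_mul, abs_pow, abs_pow, sq_abs]
      refine mul_le_mul_of_nonneg_right ?_ (sq_nonneg _)
      have h1 : 1 ≤ A.card := Finset.card_pos.mpr (Finset.nonempty_of_ne_empty hA)
      calc |C| ^ A.card ≤ |C| ^ 1 :=
            pow_le_pow_of_le_one (abs_nonneg C) hC h1
        _ = |C| := pow_one _
  have hpar : ∑ A ∈ (Finset.univ : Finset (Fin k)).powerset,
      (∑ S : Fin k → Bool, a S * ∏ j ∈ A, pm (S j)) ^ 2 = 4 ^ k := by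
    rw [parseval]
    have : ∀ S : Fin k → Bool, a S ^ 2 = 1 := fun S => pm_sq (α S)
    simp_rw [this]
    simp [Finset.card_univ]
    rw [← mul_pow]
    norm_num
  have hk4 : (0:ℝ) < 4 ^ k := by positivity
  rw [abs_div, abs_of_pos hk4, div_le_iff₀ hk4]
  calc |∑ A ∈ (Finset.univ : Finset (Fin k)).powerset, C ^ A.card *
          (∑ S : Fin k → Bool, a S * ∏ j ∈ A, pm (S j)) ^ 2|
      ≤ ∑ A ∈ (Finset.univ : Finset (Fin k)).powerset,
          |C ^ A.card * (∑ S : Fin k → Bool, a S * ∏ j ∈ A, pm (S j)) ^ 2| :=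
        Finset.abs_sum_le_sum_abs _ _
    _ ≤ ∑ A ∈ (Finset.univ : Finset (Fin k)).powerset,
          |C| * (∑ S : Fin k → Bool, a S * ∏ j ∈ A, pm (S j)) ^ 2 :=
        Finset.sum_le_sum hterm
    _ = |C| * 4 ^ k := by rw [← Finset.mul_sum, hpar]

/-- Proposition 2: for odd `k`, if `tanh²β < b(k)` then `C = 0` is the unique fixed
point in `(-1,1)` of the correlation map of any ensemble of balanced Boolean functions. -/
theorem stmt12 (k : ℕ) (hk : Odd k) (β : ℝ) (hβ : 0 < β)
    (b : ℝ)
    (hb : b = 2 ^ (k - 1) / ((k : ℝ) * (Nat.choose (k - 1) ((k - 1) / 2) : ℝ)))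
    (ht : Real.tanh β ^ 2 < b)
    (μ : ((Fin k → Bool) → Bool) → ℝ)
    (hμ0 : ∀ α, 0 ≤ μ α) (hμ1 : ∑ α, μ α = 1)
    (hbal : ∀ α, μ α ≠ 0 → ∑ S : Fin k → Bool, pm (α S) = 0)
    (G : ℝ → ℝ)
    (hG : ∀ C, G C = Real.tanh β ^ 2 *
      ∑ S : Fin k → Bool, ∑ T : Fin k → Bool,
        (∏ j, (1 + pm (S j) * pm (T j) * C) / 4) *
          (∑ α, μ α * (pm (α S) * pm (α T)))) :
    ∀ C ∈ Set.Ioo (-1:ℝ) 1, (G C = C ↔ C = 0) := by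
  -- Step 1: b ≤ 1, hence tanh²β < 1
  obtain ⟨m, hm⟩ := hk
  have hk1 : k - 1 = 2 * m := by omega
  have hk2 : (k - 1) / 2 = m := by omega
  have hcb : (4:ℝ) ^ m ≤ (k : ℝ) * (Nat.choose (k - 1) ((k - 1) / 2) : ℝ) := by
    rw [hk2, hk1]
    have : 4 ^ m ≤ (2 * m + 1) * Nat.centralBinom m := by
      calc 4 ^ m = 2 ^ (2 * m) := by rw [pow_mul]; norm_num
        _ = ∑ i ∈ Finset.range (2 * m + 1), (2 * m).choose i :=
            (Nat.sum_range_choose (2 * m)).symm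
        _ ≤ ∑ _i ∈ Finset.range (2 * m + 1), Nat.centralBinom m :=
            Finset.sum_le_sum fun i _ => Nat.choose_le_centralBinom i m
        _ = (2 * m + 1) * Nat.centralBinom m := by
            rw [Finset.sum_const, Finset.card_range, smul_eq_mul]
    have hcast : ((4 ^ m : ℕ) : ℝ) ≤ (((2 * m + 1) * m.centralBinom : ℕ) : ℝ) := by
      exact_mod_cast this
    push_cast at hcast
    rw [Nat.centralBinom] at hcast
    calc (4:ℝ) ^ m ≤ (2 * m + 1) * (Nat.choose (2 * m) m : ℝ) := hcast
      _ = (k : ℝ) * (Nat.choose (2 * m) m : ℝ) := by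
          congr 1
          rw [hm]; push_cast; ring
  have hpos : (0:ℝ) < (k : ℝ) * (Nat.choose (k - 1) ((k - 1) / 2) : ℝ) := by
    apply mul_pos
    · have : 0 < k := by omega
      exact_mod_cast this
    · have : 0 < Nat.choose (k - 1) ((k - 1) / 2) := by
        apply Nat.choose_pos
        omega
      exact_mod_cast this
  have hb1 : b ≤ 1 := by
    rw [hb, div_le_one hpos]
    calc (2:ℝ) ^ (k - 1) = 4 ^ m := by
          rw [hk1, pow_mul]; norm_num
      _ ≤ _ := hcb
  have ht1 : Real.tanh β ^ 2 < 1 := lt_of_lt_of_le ht hb1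
  -- Step 2: rewrite G as a sum over α
  have hG' : ∀ C, G C = Real.tanh β ^ 2 *
      ∑ α, μ α * (∑ S : Fin k → Bool, ∑ T : Fin k → Bool,
        (∏ j, (1 + pm (S j) * pm (T j) * C) / 4) * (pm (α S) * pm (α T))) := by
    intro C
    rw [hG]
    congr 1
    simp_rw [Finset.mul_sum]
    trans (∑ S : Fin k → Bool, ∑ α, ∑ T : Fin k → Bool,
        (∏ j, (1 + pm (S j) * pm (T j) * C) / 4) * (μ α * (pm (α S) * pm (α T))))
    · exact Finset.sum_congr rfl fun S _ => Finset.sum_comm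
    trans (∑ α, ∑ S : Fin k → Bool, ∑ T : Fin k → Bool,
        (∏ j, (1 + pm (S j) * pm (T j) * C) / 4) * (μ α * (pm (α S) * pm (α T))))
    · exact Finset.sum_comm
    · refine Finset.sum_congr rfl fun α _ => Finset.sum_congr rfl fun S _ =>
        Finset.sum_congr rfl fun T _ => by ring
  -- Step 3: the master bound
  have hGb : ∀ C : ℝ, |C| ≤ 1 → |G C| ≤ Real.tanh β ^ 2 * |C| := by
    intro C hC
    rw [hG', abs_mul, abs_of_nonneg (sq_nonneg _)]
    refine mul_le_mul_of_nonneg_left ?_ (sq_nonneg _)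
    calc |∑ α, μ α * (∑ S : Fin k → Bool, ∑ T : Fin k → Bool,
            (∏ j, (1 + pm (S j) * pm (T j) * C) / 4) * (pm (α S) * pm (α T)))|
        ≤ ∑ α, |μ α * (∑ S : Fin k → Bool, ∑ T : Fin k → Bool,
            (∏ j, (1 + pm (S j) * pm (T j) * C) / 4) * (pm (α S) * pm (α T)))| :=
          Finset.abs_sum_le_sum_abs _ _
      _ ≤ ∑ α, μ α * |C| := by
          refine Finset.sum_le_sum fun α _ => ?_
          rcases eq_or_ne (μ α) 0 with h0 | h0
          · rw [h0]; simp
          · rw [abs_mul, abs_of_nonneg (hμ0 α)]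
            exact mul_le_mul_of_nonneg_left (Hbound α (hbal α h0) C hC) (hμ0 α)
      _ = |C| := by rw [← Finset.sum_mul, hμ1, one_mul]
  -- Step 4: conclude
  intro C hC
  have hCabs : |C| < 1 := abs_lt.mpr ⟨hC.1, hC.2⟩
  constructor
  · intro hfix
    by_contra hC0
    have hpos' : 0 < |C| := abs_pos.mpr hC0
    have h1 : |C| ≤ Real.tanh β ^ 2 * |C| := by
      calc |C| = |G C| := by rw [hfix]
        _ ≤ Real.tanh β ^ 2 * |C| := hGb C hCabs.le
    have h2 : Real.tanh β ^ 2 * |C| < 1 * |C| :=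
      mul_lt_mul_of_pos_right ht1 hpos'
    rw [one_mul] at h2
    exact absurd (lt_of_le_of_lt h1 h2) (lt_irrefl _)
  · intro h0
    subst h0
    have := hGb 0 (by simp)
    simp at this
    exact this
end
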